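/- Let x^{k+1} ∈ P_{C_s}(x^k − (1/L)∇f(x^k)) be one iteration of iterative hard thresholding with L > L(f), where ∇f is L(f)-Lipschitz. Then f(x^k) − f(x^{k+1}) ≥ ((L − L(f))/2)‖x^k − x^{k+1}‖²; consequently the sequence {f(x^k)} is nonincreasing, and if additionally f is bounded below, then ‖x^k − x^{k+1}‖ → 0 and {f(x^k)} converges. -/

import Mathlib

noncomputable section
open scoped RealInnerProductSpace

/-- the number of nonzero components of `x` -/
def norm0 {n : ℕ} (x : EuclideanSpace ℝ (Fin n)) : ℕ :=
  (Finset.univ.filter fun i => x i ≠ 0).card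

/-- the sparsity constraint set `C_s` -/
def Cs (n s : ℕ) : Set (EuclideanSpace ℝ (Fin n)) := {x | norm0 x ≤ s}

/-- the set-valued Euclidean projection onto `Cs n s` -/
def projCs (n s : ℕ) (w : EuclideanSpace ℝ (Fin n)) : Set (EuclideanSpace ℝ (Fin n)) :=
  {y | y ∈ Cs n s ∧ ∀ z ∈ Cs n s, ‖y - w‖ ≤ ‖z - w‖}

/-- the s-th largest absolute value of a component of `x` -/
def Msval {n : ℕ} (s : ℕ) (x : EuclideanSpace ℝ (Fin n)) : ℝ :=
  (((List.ofFn fun i => |x i|).mergeSort (· ≥ ·)).getD (s - 1) 0)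

/-! A projected gradient step onto any set containing the current iterate moves no farther from
the gradient step than the iterate itself; expanding the squares gives
`⟪∇f x, y - x⟫ ≤ -(L/2)‖y - x‖²`, and the descent lemma for an `Lf`-Lipschitz gradient turns this
into the decrease `f x - f y ≥ (L - Lf)/2 ‖x - y‖²`. The values `f (x k)` are then antitone and
bounded below, so they converge and their successive differences, which dominate
`‖x k - x (k + 1)‖²`, tend to zero. Sparsity plays no role beyond `x k ∈ Cs n s`. -/

open Filter Set Topology

section Descent

variable {E : Type*} [NormedAddCommGroup E] [InnerProductSpace ℝ E]

lemma inner_le_of_norm_sub_gradientStep_le {L : ℝ} (hL : 0 < L) {x y g : E}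
    (hy : ‖y - (x - (1 / L) • g)‖ ≤ ‖x - (x - (1 / L) • g)‖) :
    ⟪g, y - x⟫ ≤ -(L / 2) * ‖y - x‖ ^ 2 := by
  rw [show y - (x - (1 / L) • g) = (y - x) + (1 / L) • g by abel, sub_sub_cancel] at hy
  have hsq := pow_le_pow_left₀ (norm_nonneg _) hy 2
  rw [norm_add_sq_real, real_inner_smul_right, real_inner_comm] at hsq
  have : L * ‖y - x‖ ^ 2 + 2 * ⟪g, y - x⟫ ≤ 0 := by
    have := mul_le_mul_of_nonneg_left hsq hL.le
    field_simp at this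
    linarith
  linarith

variable [CompleteSpace E] {f : E → ℝ} {Lf : ℝ}

lemma hasDerivAt_comp_add_smul (hf : Differentiable ℝ f) (x d : E) (t : ℝ) :
    HasDerivAt (fun t : ℝ => f (x + t • d)) ⟪gradient f (x + t • d), d⟫ t := by
  have hline : HasDerivAt (fun t : ℝ => x + t • d) d t := by
    simpa using ((hasDerivAt_id t).smul_const d).const_add x
  have h := ((hf _).hasGradientAt.hasFDerivAt).comp_hasDerivAt t hline
  rw [InnerProductSpace.toDual_apply_apply] at h
  exact h

lemma le_add_inner_gradient_add_sq (hf : Differentiable ℝ f)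
    (hlip : ∀ x y, ‖gradient f x - gradient f y‖ ≤ Lf * ‖x - y‖) (x d : E) :
    f (x + d) ≤ f x + ⟪gradient f x, d⟫ + Lf / 2 * ‖d‖ ^ 2 := by
  -- `f` minus its quadratic model along the segment is antitone on `t ≥ 0`.
  set φ : ℝ → ℝ := fun t => f (x + t • d) - t * ⟪gradient f x, d⟫ - Lf / 2 * t ^ 2 * ‖d‖ ^ 2
  have hφ' : ∀ t, HasDerivAt φ
      (⟪gradient f (x + t • d), d⟫ - ⟪gradient f x, d⟫ - Lf * t * ‖d‖ ^ 2) t := by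
    intro t
    exact (((hasDerivAt_comp_add_smul hf x d t).sub
      ((hasDerivAt_id t).mul_const ⟪gradient f x, d⟫)).sub
        (((hasDerivAt_pow 2 t).const_mul (Lf / 2)).mul_const (‖d‖ ^ 2))).congr_deriv
      (by simp only [Nat.cast_ofNat, Nat.add_one_sub_one, pow_one]; ring)
  have hanti : AntitoneOn φ (Ici 0) := by
    refine antitoneOn_of_hasDerivWithinAt_nonpos (convex_Ici 0)
      (fun t _ => (hφ' t).continuousAt.continuousWithinAt) (fun t _ => (hφ' t).hasDerivWithinAt)
      fun t ht => ?_
    rw [interior_Ici, mem_Ioi] at ht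
    have := hlip (x + t • d) x
    rw [add_sub_cancel_left, norm_smul, Real.norm_of_nonneg ht.le] at this
    calc ⟪gradient f (x + t • d), d⟫ - ⟪gradient f x, d⟫ - Lf * t * ‖d‖ ^ 2
        = ⟪gradient f (x + t • d) - gradient f x, d⟫ - Lf * t * ‖d‖ ^ 2 := by
          rw [inner_sub_left]
      _ ≤ ‖gradient f (x + t • d) - gradient f x‖ * ‖d‖ - Lf * t * ‖d‖ ^ 2 := by
          gcongr; exact real_inner_le_norm _ _
      _ ≤ 0 := by nlinarith [norm_nonneg d]
  have := hanti (mem_Ici.2 le_rfl) (mem_Ici.2 zero_le_one) zero_le_one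
  simp only [φ, zero_smul, add_zero, zero_mul, sub_zero, one_smul, one_mul, one_pow, ne_eq,
    OfNat.ofNat_ne_zero, not_false_eq_true, zero_pow, mul_zero] at this
  linarith

lemma sufficient_decrease_of_norm_sub_gradientStep_le (hf : Differentiable ℝ f)
    (hlip : ∀ x y, ‖gradient f x - gradient f y‖ ≤ Lf * ‖x - y‖) {L : ℝ} (hL : Lf < L)
    {x y : E} (hy : ‖y - (x - (1 / L) • gradient f x)‖ ≤ ‖x - (x - (1 / L) • gradient f x)‖) :
    (L - Lf) / 2 * ‖x - y‖ ^ 2 ≤ f x - f y := by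
  rcases eq_or_ne x y with rfl | hxy
  · simp
  have hLf : 0 ≤ Lf := nonneg_of_mul_nonneg_left ((norm_nonneg _).trans (hlip x y))
    (norm_pos_iff.2 (sub_ne_zero.2 hxy))
  have hstep := inner_le_of_norm_sub_gradientStep_le (hLf.trans_lt hL) hy
  have hdesc := le_add_inner_gradient_add_sq hf hlip x (y - x)
  rw [add_sub_cancel] at hdesc
  rw [norm_sub_rev]
  linarith

end Descent

lemma tendsto_sub_succ_of_antitone {a : ℕ → ℝ} (ha : Antitone a) (hb : BddBelow (range a)) :
    Tendsto (fun k => a k - a (k + 1)) atTop (𝓝 0) := by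
  have hlim := tendsto_atTop_ciInf ha hb
  simpa using hlim.sub (hlim.comp (tendsto_add_atTop_nat 1))

lemma tendsto_zero_of_mul_sq_le_sub_succ {a u : ℕ → ℝ} {c : ℝ} (hc : 0 < c)
    (hb : BddBelow (range a)) (hu : ∀ k, 0 ≤ u k) (h : ∀ k, c * u k ^ 2 ≤ a k - a (k + 1)) :
    Tendsto u atTop (𝓝 0) := by
  have ha : Antitone a := antitone_nat_of_succ_le fun k => by
    nlinarith [h k, sq_nonneg (u k)]
  have hsq : Tendsto (fun k => u k ^ 2) atTop (𝓝 0) := by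
    refine squeeze_zero (fun k => sq_nonneg _) (fun k => ?_)
      (by simpa using (tendsto_sub_succ_of_antitone ha hb).const_mul c⁻¹)
    rw [le_inv_mul_iff₀ hc]
    exact h k
  simpa [Real.sqrt_sq (hu _)] using hsq.sqrt

/-- Basic properties of the IHT method: sufficient decrease, monotonicity,
vanishing successive differences and convergence of function values. -/
theorem stmt13 {n s : ℕ} (f : EuclideanSpace ℝ (Fin n) → ℝ) (hf : ContDiff ℝ 1 f)
    (Lf L : ℝ)
    (hlip : ∀ x y, ‖gradient f x - gradient f y‖ ≤ Lf * ‖x - y‖)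
    (hL : Lf < L)
    (hbd : ∃ γ : ℝ, ∀ y, γ ≤ f y)
    (x : ℕ → EuclideanSpace ℝ (Fin n)) (hx0 : x 0 ∈ Cs n s)
    (hiter : ∀ k, x (k + 1) ∈ projCs n s (x k - (1 / L) • gradient f (x k))) :
    (∀ k, (L - Lf) / 2 * ‖x k - x (k + 1)‖ ^ 2 ≤ f (x k) - f (x (k + 1))) ∧
    (∀ k, f (x (k + 1)) ≤ f (x k)) ∧
    Filter.Tendsto (fun k => ‖x k - x (k + 1)‖) Filter.atTop (nhds 0) ∧
    (∃ c : ℝ, Filter.Tendsto (fun k => f (x k)) Filter.atTop (nhds c)) := by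
  have hmem : ∀ k, x k ∈ Cs n s
    | 0 => hx0
    | k + 1 => (hiter k).1
  have hdecrease : ∀ k, (L - Lf) / 2 * ‖x k - x (k + 1)‖ ^ 2 ≤ f (x k) - f (x (k + 1)) :=
    fun k => sufficient_decrease_of_norm_sub_gradientStep_le (hf.differentiable one_ne_zero)
      hlip hL ((hiter k).2 (x k) (hmem k))
  have hmono : ∀ k, f (x (k + 1)) ≤ f (x k) := fun k => by
    nlinarith [hdecrease k, sq_nonneg ‖x k - x (k + 1)‖]
  obtain ⟨γ, hγ⟩ := hbd
  have hbdd : BddBelow (range fun k => f (x k)) := ⟨γ, by rintro _ ⟨k, rfl⟩; exact hγ _⟩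
  exact ⟨hdecrease, hmono,
    tendsto_zero_of_mul_sq_le_sub_succ (by linarith) hbdd (fun k => norm_nonneg _) hdecrease,
    _, tendsto_atTop_ciInf (antitone_nat_of_succ_le hmono) hbdd⟩
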